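/- Let n₁, …, n₁₀ be integers with nᵢ ≥ 2 for all i, and let M be the rank 11 positive definite lattice with a basis (𝔬, μ₁, …, μ₁₀) whose Gram matrix is the diagonal matrix diag(3, 2n₁, 2n₂, …, 2n₁₀). Then M is not admissible if any one of the following holds: (1) 3 divides nᵢ for all 1 ≤ i ≤ 10; (2) 2 divides nᵢ for all 1 ≤ i ≤ 10; (3) there exists an odd prime p ≡ 2 (mod 3) such that p divides nᵢ for all 1 ≤ i ≤ 10. -/

import Mathlib

/-- An integer `d` satisfies property `(**)`: `4 ∤ d`, `9 ∤ d`, and `p ∤ d` for every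
odd prime `p ≡ 2 (mod 3)`. -/
def DStar (d : ℤ) : Prop :=
  ¬ (4 ∣ d) ∧ ¬ (9 ∣ d) ∧ ∀ p : ℕ, p.Prime → p % 2 = 1 → p % 3 = 2 → ¬ ((p : ℤ) ∣ d)

/-- A positive definite lattice `(M, B)` with distinguished element `𝔬` is admissible if
it has a rank `2` primitive sublattice `K` containing `𝔬` whose discriminant
satisfies `(**)`. -/
def IsAdmissible {M : Type*} [AddCommGroup M] [Module ℤ M]
    (B : M →ₗ[ℤ] M →ₗ[ℤ] ℤ) (o : M) : Prop :=
  ∃ (K : Submodule ℤ M) (c : Module.Basis (Fin 2) ℤ K),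
    o ∈ K ∧
    (∀ (x : M) (m : ℤ), m ≠ 0 → m • x ∈ K → x ∈ K) ∧
    DStar (B (c 0 : M) (c 0 : M) * B (c 1 : M) (c 1 : M) -
           B (c 0 : M) (c 1 : M) * B (c 1 : M) (c 0 : M))


/-!
Modulo any `m` dividing every `2 nᵢ`, the form is congruent to the rank-one form `3 x₀ y₀`,
whose `2 × 2` Gram determinants vanish, so the discriminant of every rank-two sublattice is
divisible by `m`; this excludes `(**)` for `m = 4` (case 2) and `m = p` (case 3). In case 1
every value of the form is divisible by `3`, so every discriminant is divisible by `9`.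
-/

section DiagonalForm

variable {R M ι : Type*} [CommRing R] [AddCommGroup M] [Module R M] [Fintype ι] [DecidableEq ι]
  {B : M →ₗ[R] M →ₗ[R] R} {b : Module.Basis ι R M} {d : ι → R}

theorem apply_eq_sum_of_diagonal (h : ∀ i j, B (b i) (b j) = if i = j then d i else 0)
    (x y : M) : B x y = ∑ i, d i * b.repr x i * b.repr y i := by
  conv_lhs => rw [← b.sum_repr x, ← b.sum_repr y]
  simp only [map_sum, map_smul, LinearMap.sum_apply, LinearMap.smul_apply, smul_eq_mul, h,
    mul_ite, mul_zero, Finset.sum_ite_eq', Finset.mem_univ, if_true]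
  exact Finset.sum_congr rfl fun i _ => by ring

theorem dvd_apply_of_diagonal (h : ∀ i j, B (b i) (b j) = if i = j then d i else 0) {m : R}
    (hm : ∀ i, m ∣ d i) (x y : M) : m ∣ B x y := by
  rw [apply_eq_sum_of_diagonal h]
  exact Finset.dvd_sum fun i _ => ((hm i).mul_right _).mul_right _

theorem dvd_apply_sub_of_diagonal (h : ∀ i j, B (b i) (b j) = if i = j then d i else 0) {m : R}
    (i₀ : ι) (hm : ∀ i ≠ i₀, m ∣ d i) (x y : M) :
    m ∣ B x y - d i₀ * b.repr x i₀ * b.repr y i₀ := by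
  rw [apply_eq_sum_of_diagonal h, Fintype.sum_eq_add_sum_compl i₀, add_sub_cancel_left]
  exact Finset.dvd_sum fun i hi =>
    ((hm i (Finset.mem_compl.mp hi ∘ Finset.mem_singleton.mpr)).mul_right _).mul_right _

end DiagonalForm

section GramDeterminant

variable {R M : Type*} [CommRing R] {B : M → M → R} {m : R}

theorem sq_dvd_gram_det_of_dvd (hB : ∀ x y, m ∣ B x y) (u v : M) :
    m ^ 2 ∣ B u u * B v v - B u v * B v u :=
  sq m ▸ dvd_sub (mul_dvd_mul (hB u u) (hB v v)) (mul_dvd_mul (hB u v) (hB v u))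

theorem dvd_gram_det_of_dvd_sub_rank_one {c : R} {f : M → R}
    (hB : ∀ x y, m ∣ B x y - c * f x * f y) (u v : M) :
    m ∣ B u u * B v v - B u v * B v u := by
  have hdet : B u u * B v v - B u v * B v u =
      (B u u - c * f u * f u) * B v v + c * f u * f u * (B v v - c * f v * f v)
        - ((B u v - c * f u * f v) * B v u + c * f u * f v * (B v u - c * f v * f u)) := by
    ring
  rw [hdet]
  exact dvd_sub (dvd_add ((hB u u).mul_right _) ((hB v v).mul_left _))
    (dvd_add ((hB u v).mul_right _) ((hB v u).mul_left _))

end GramDeterminant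

theorem rank_eleven_diagonal_not_admissible_general
    {M : Type*} [AddCommGroup M] [Module ℤ M]
    (nn : Fin 10 → ℤ)
    (B : M →ₗ[ℤ] M →ₗ[ℤ] ℤ)
    (b : Module.Basis (Fin 11) ℤ M)
    (hgram : ∀ i j : Fin 11, B (b i) (b j) =
      if i = j then (Fin.cons (3 : ℤ) (fun k : Fin 10 => 2 * nn k) : Fin 11 → ℤ) i else 0)
    (hdiv : (∀ i, (3 : ℤ) ∣ nn i) ∨ (∀ i, (2 : ℤ) ∣ nn i) ∨
      (∃ p : ℕ, p.Prime ∧ p % 2 = 1 ∧ p % 3 = 2 ∧ ∀ i, (p : ℤ) ∣ nn i)) :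
    ¬ IsAdmissible B (b 0) := by
  rintro ⟨K, c, -, -, hD⟩
  have hdisc (m : ℤ) (hm : ∀ k, m ∣ 2 * nn k) (u v : M) :
      m ∣ B u u * B v v - B u v * B v u :=
    dvd_gram_det_of_dvd_sub_rank_one (B := fun x y => B x y)
      (dvd_apply_sub_of_diagonal hgram 0 fun i hi => by
        obtain ⟨k, rfl⟩ := Fin.exists_succ_eq.mpr hi
        exact hm k) u v
  obtain h3 | h2 | ⟨p, hp, hodd, hp3, hpd⟩ := hdiv
  · have h9 := sq_dvd_gram_det_of_dvd (B := fun x y => B x y)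
      (dvd_apply_of_diagonal hgram fun i => Fin.cases (dvd_refl 3) (fun k => (h3 k).mul_left 2) i)
      (c 0 : M) (c 1 : M)
    exact hD.2.1 (by simpa using h9)
  · exact hD.1 (hdisc 4 (fun k => mul_dvd_mul_left 2 (h2 k)) _ _)
  · exact hD.2.2 p hp hodd hp3 (hdisc p (fun k => (hpd k).mul_left 2) _ _)

/-- Let `n₁, …, n₁₀` be integers `≥ 2` and let `M` be the rank `11` positive definite
lattice with basis `(𝔬, μ₁, …, μ₁₀)` and Gram matrix `diag(3, 2n₁, …, 2n₁₀)`.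
Then `M` is not admissible if (1) `3 ∣ nᵢ` for all `i`, or (2) `2 ∣ nᵢ` for all `i`,
or (3) there is an odd prime `p ≡ 2 (mod 3)` with `p ∣ nᵢ` for all `i`. -/
theorem rank_eleven_diagonal_not_admissible
    {M : Type*} [AddCommGroup M] [Module ℤ M]
    (nn : Fin 10 → ℤ) (hnn : ∀ i, 2 ≤ nn i)
    (B : M →ₗ[ℤ] M →ₗ[ℤ] ℤ)
    (hsymm : ∀ x y : M, B x y = B y x)
    (b : Module.Basis (Fin 11) ℤ M)
    (hgram : ∀ i j : Fin 11, B (b i) (b j) =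
      if i = j then (Fin.cons (3 : ℤ) (fun k : Fin 10 => 2 * nn k) : Fin 11 → ℤ) i else 0)
    (hdiv : (∀ i, (3 : ℤ) ∣ nn i) ∨ (∀ i, (2 : ℤ) ∣ nn i) ∨
      (∃ p : ℕ, p.Prime ∧ p % 2 = 1 ∧ p % 3 = 2 ∧ ∀ i, (p : ℤ) ∣ nn i)) :
    ¬ IsAdmissible B (b 0) :=
  rank_eleven_diagonal_not_admissible_general nn B b hgram hdiv
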